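/- arXiv:1306.2713 — 2 statements merged into one kernel-verified Lean document; each statement's English description precedes it below -/
import Mathlib

section
/- Let φ = Σ_{i=1}^{n} c_i/2^i with c_i ∈ {0,1}, n = m·k, and F(j) defined by F(0)=0, F(j) = Σ_{t=1}^{k} c_{n-jk+t}/2^t + F(j-1)/2^k. Then for each stage j and each t with 1 ≤ t ≤ k, the fractional part of 2^{n-jk+t-1}·φ equals Σ_{i=1}^{k-t+1} c_{n-jk+t-1+i}/2^i + F(j-1)/2^{k-t+1}, i.e. subtracting F(j-1)/2^{k-t+1} from the kicked-back phase leaves exactly the k−t+1 not-yet-measured bits 0.c_{n-jk+t}…c_{n-jk+k}. -/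
open Finset

private lemma icc_eq_ioc (n : ℕ) : Finset.Icc 1 n = Finset.Ioc 0 n := by
  ext x; simp; omega

private lemma shift_sum (f : ℕ → ℝ) (L s : ℕ) :
    ∑ i ∈ Finset.Ioc s (s + L), f i = ∑ i ∈ Finset.Ioc 0 L, f (s + i) := by
  rw [show Finset.Ioc s (s + L) = (Finset.Ioc 0 L).map (addLeftEmbedding s) by
        rw [Finset.map_add_left_Ioc]; simp, Finset.sum_map]
  simp [addLeftEmbedding_apply]

private lemma sum_bits_le (c : ℕ → ℕ) (hc : ∀ i, c i ≤ 1) (a L : ℕ) :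
    ∑ i ∈ Finset.Ioc 0 L, (c (a + i) : ℝ) / 2 ^ i ≤ 1 - 1 / 2 ^ L := by
  induction L with
  | zero => simp
  | succ L ih =>
    rw [Finset.sum_Ioc_succ_top (Nat.zero_le L)]
    have h1 : (c (a + (L + 1)) : ℝ) ≤ 1 := by exact_mod_cast hc _
    have h2 : (c (a + (L + 1)) : ℝ) / 2 ^ (L + 1) ≤ 1 / 2 ^ (L + 1) := by
      apply div_le_div_of_nonneg_right h1 (by positivity) |>.trans_eq rfl
    have : (1 : ℝ) - 1 / 2 ^ L + 1 / 2 ^ (L + 1) = 1 - 1 / 2 ^ (L + 1) := by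
      field_simp; ring
    linarith

private lemma fract_shift (c : ℕ → ℕ) (hc : ∀ i, c i ≤ 1) (n N : ℕ) (hN : N ≤ n) :
    Int.fract ((2 : ℝ) ^ N * ∑ i ∈ Finset.Icc 1 n, (c i : ℝ) / 2 ^ i)
      = ∑ i ∈ Finset.Ioc 0 (n - N), (c (N + i) : ℝ) / 2 ^ i := by
  rw [icc_eq_ioc, Finset.mul_sum,
    ← Finset.sum_Ioc_consecutive _ (Nat.zero_le N) hN]
  have hint : ∑ i ∈ Finset.Ioc 0 N, (2 : ℝ) ^ N * ((c i : ℝ) / 2 ^ i)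
      = ((∑ i ∈ Finset.Ioc 0 N, (c i * 2 ^ (N - i) : ℤ) : ℤ) : ℝ) := by
    push_cast
    apply Finset.sum_congr rfl
    intro i hi
    simp only [Finset.mem_Ioc] at hi
    rw [show (2:ℝ) ^ N = 2 ^ (N - i) * 2 ^ i by rw [← pow_add]; congr 1; omega]
    field_simp
  have htail : ∑ i ∈ Finset.Ioc N n, (2 : ℝ) ^ N * ((c i : ℝ) / 2 ^ i)
      = ∑ i ∈ Finset.Ioc 0 (n - N), (c (N + i) : ℝ) / 2 ^ i := by
    rw [show n = N + (n - N) by omega, shift_sum (fun i => (2:ℝ)^N * ((c i:ℝ)/2^i))]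
    apply Finset.sum_congr (by congr 1 <;> omega)
    intro i hi
    rw [pow_add]
    field_simp
  rw [hint, htail, Int.fract_intCast_add, Int.fract_eq_self.mpr]
  constructor
  · positivity
  · calc ∑ i ∈ Finset.Ioc 0 (n - N), (c (N + i) : ℝ) / 2 ^ i
        ≤ 1 - 1 / 2 ^ (n - N) := sum_bits_le c hc N (n - N)
      _ < 1 := by have : (0:ℝ) < 1 / 2 ^ (n - N) := by positivity
                  linarith

/-- At stage `j` of the staged phase estimation, for the `t`-th qubit the
fractional part of the kicked-back phase `2^{n-jk+t-1}·φ` consists of the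
`k - t + 1` not-yet-measured bits `0.c_{n-jk+t}…c_{n-jk+k}` plus the previously
discovered phase `F(j-1)` shifted right by `k - t + 1` bits. -/
theorem stmt_6 (n k m : ℕ) (hk : 0 < k) (hm : 0 < m) (hn : n = m * k)
    (c : ℕ → ℕ) (hc : ∀ i, c i = 0 ∨ c i = 1)
    (φ : ℝ) (hφ : φ = ∑ i ∈ Finset.Icc 1 n, (c i : ℝ) / 2 ^ i)
    (F : ℕ → ℝ) (hF0 : F 0 = 0)
    (hFrec : ∀ j, 1 ≤ j → j ≤ m →
      F j = (∑ t ∈ Finset.Icc 1 k, (c (n - j * k + t) : ℝ) / 2 ^ t) + F (j - 1) / 2 ^ k)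
    (j t : ℕ) (hj1 : 1 ≤ j) (hjm : j ≤ m) (ht1 : 1 ≤ t) (htk : t ≤ k) :
    Int.fract ((2 : ℝ) ^ (n - j * k + t - 1) * φ) =
      (∑ i ∈ Finset.Icc 1 (k - t + 1), (c (n - j * k + t - 1 + i) : ℝ) / 2 ^ i) +
        F (j - 1) / 2 ^ (k - t + 1) := by
  have hc' : ∀ i, c i ≤ 1 := fun i => by rcases hc i with h | h <;> omega
  -- closed form for F
  have hFclosed : ∀ j', j' ≤ m →
      F j' = ∑ i ∈ Finset.Ioc 0 (j' * k), (c (n - j' * k + i) : ℝ) / 2 ^ i := by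
    intro j'
    induction j' with
    | zero => intro _; simp [hF0]
    | succ j' ih =>
      intro hj'm
      have hle : (j' + 1) * k ≤ n := by rw [hn]; exact Nat.mul_le_mul_right k hj'm
      have hjk' : (j' + 1) * k = j' * k + k := by ring
      have key : F j' / 2 ^ k
          = ∑ i ∈ Finset.Ioc k (k + j' * k),
              (c (n - (j' + 1) * k + i) : ℝ) / 2 ^ i := by
        rw [shift_sum (fun i => (c (n - (j' + 1) * k + i) : ℝ) / 2 ^ i) (j' * k) k,
          ih (by omega), Finset.sum_div]
        apply Finset.sum_congr rfl
        intro i hi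
        simp only [Finset.mem_Ioc] at hi
        have h1 : n - (j' + 1) * k + (k + i) = n - j' * k + i := by omega
        simp only [h1, pow_add]
        rw [div_div]
        ring_nf
      rw [hFrec (j' + 1) (by omega) hj'm, Nat.add_sub_cancel, key, icc_eq_ioc,
        Finset.sum_Ioc_consecutive _ (Nat.zero_le k) (by omega : k ≤ k + j' * k),
        show k + j' * k = (j' + 1) * k from by rw [hjk', Nat.add_comm]]
  -- main computation
  obtain ⟨j', rfl⟩ : ∃ j', j = j' + 1 := ⟨j - 1, by omega⟩
  have hjk' : (j' + 1) * k = j' * k + k := by ring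
  have hle : (j' + 1) * k ≤ n := by rw [hn]; exact Nat.mul_le_mul_right k hjm
  set N := n - (j' + 1) * k + t - 1 with hN
  have hNn : N ≤ n := by omega
  rw [hφ, fract_shift c hc' n N hNn]
  have hlen : n - N = (k - t + 1) + j' * k := by omega
  rw [hlen, ← Finset.sum_Ioc_consecutive _ (Nat.zero_le (k - t + 1))
      (by omega : k - t + 1 ≤ (k - t + 1) + j' * k)]
  have hB : ∑ i ∈ Finset.Ioc (k - t + 1) (k - t + 1 + j' * k), (c (N + i) : ℝ) / 2 ^ i
      = F (j' + 1 - 1) / 2 ^ (k - t + 1) := by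
    rw [shift_sum (fun i => (c (N + i) : ℝ) / 2 ^ i) (j' * k) (k - t + 1),
      Nat.add_sub_cancel, hFclosed j' (by omega), Finset.sum_div]
    apply Finset.sum_congr rfl
    intro i hi
    simp only [Finset.mem_Ioc] at hi
    have h1 : N + (k - t + 1 + i) = n - j' * k + i := by omega
    simp only [h1, pow_add]
    rw [div_div]
    ring_nf
  rw [hB, icc_eq_ioc]
end

section
/- Define G : ℕ → ℕ by G(k) = k * ⌈log₂ k⌉ (rotation-gate count of the recursive inverse QFT on k qubits, for k a power of 2) and define the total cost C(n,k) = G(k) + (⌈n/k⌉ − 1)·(k + G(k)). Then for k a power of 2 with 2 ≤ k ≤ n, C(n,k) ≤ 4·n·log₂ k, i.e. the total number of rotation-gate invocations is O(n log k). -/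
/-- With `G k = k·⌈log₂ k⌉` rotation gates for the recursive inverse QFT on `k`
qubits and `⌈n/k⌉` stages (the first costing `G k`, each later one `k + G k`),
the total rotation-gate count is at most `4·n·log₂ k`, i.e. `O(n log k)`. -/
theorem stmt_7 (n k : ℕ) (hpow : ∃ j : ℕ, k = 2 ^ j) (hk : 2 ≤ k) (hkn : k ≤ n)
    (G : ℕ → ℕ) (hG : ∀ x, G x = x * Nat.clog 2 x) :
    G k + ((n + k - 1) / k - 1) * (k + G k) ≤ 4 * n * Nat.log 2 k := by
  obtain ⟨j, rfl⟩ := hpow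
  have hj : 1 ≤ j := by
    by_contra h
    interval_cases j <;> omega
  have hclog : Nat.clog 2 (2 ^ j) = j := Nat.clog_pow 2 j (by norm_num)
  have hlog : Nat.log 2 (2 ^ j) = j := Nat.log_pow (by norm_num) j
  rw [hG, hclog, hlog]
  set k := 2 ^ j with hkdef
  set q := (n + k - 1) / k with hq
  have hqk : q * k ≤ n + k - 1 := Nat.div_mul_le_self _ _
  have h1 : k * j + (q - 1) * (k + k * j) ≤ q * (k + k * j) := by
    have hq1 : 1 ≤ q := by
      have : k ≤ n + k - 1 := by omega
      exact (Nat.one_le_div_iff (by omega)).2 this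
    calc k * j + (q - 1) * (k + k * j)
        ≤ (k + k * j) + (q - 1) * (k + k * j) := by
          exact Nat.add_le_add_right (Nat.le_add_left _ _) _
      _ = (q - 1 + 1) * (k + k * j) := by ring
      _ = q * (k + k * j) := by rw [Nat.sub_add_cancel hq1]
  calc k * j + (q - 1) * (k + k * j) ≤ q * (k + k * j) := h1
    _ = q * k * (1 + j) := by ring
    _ ≤ (2 * n) * (2 * j) := by
        apply Nat.mul_le_mul <;> omega
    _ = 4 * n * j := by ring
end
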